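/- Let x_1, …, x_N ∈ ℝ^d satisfy ‖x_n‖₂ ≤ M for all n = 1, …, N, and let k ≥ 0 be an integer. Then 2^{−N} Σ_{σ ∈ {−1,1}^N} sup_{w ∈ ℝ^d, ‖w‖₂ ≤ 1} Σ_{n=1}^N σ_n ⟨w, x_n⟩^k ≤ √N · M^k. -/

import Mathlib

/-! Since `⟪w, x⟫ ^ k = ⟪w ^ ⊗k, x ^ ⊗k⟫` and `‖w ^ ⊗k‖ = ‖w‖ ^ k ≤ 1`, Cauchy–Schwarz bounds the
supremum for a sign pattern `σ` by `‖∑ σₙ xₙ ^ ⊗k‖`. Averaged over all `σ`, the squared norm of a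
signed sum `∑ σₙ yₙ` is `∑ ‖yₙ‖²` because the cross terms cancel, so by Cauchy–Schwarz once more
the average norm is at most `√(∑ ‖xₙ‖ ^ 2k) ≤ √N M ^ k`. -/

open scoped InnerProductSpace

open Finset

namespace EuclideanSpace

variable {ι : Type*} [Fintype ι]

noncomputable def tensorPow (k : ℕ) (v : EuclideanSpace ℝ ι) : EuclideanSpace ℝ (Fin k → ι) :=
  WithLp.toLp 2 fun i => ∏ j, v (i j)

theorem inner_tensorPow (k : ℕ) (v w : EuclideanSpace ℝ ι) :
    ⟪tensorPow k v, tensorPow k w⟫_ℝ = ⟪v, w⟫_ℝ ^ k := by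
  simp only [tensorPow, PiLp.inner_apply, RCLike.inner_apply, conj_trivial,
    Fintype.sum_pow, prod_mul_distrib]

theorem norm_tensorPow (k : ℕ) (v : EuclideanSpace ℝ ι) :
    ‖tensorPow k v‖ = ‖v‖ ^ k := by
  have h := inner_tensorPow k v v
  rw [real_inner_self_eq_norm_sq, real_inner_self_eq_norm_sq, ← pow_mul, mul_comm, pow_mul] at h
  exact (pow_left_inj₀ (norm_nonneg _) (by positivity) two_ne_zero).1 h

theorem sum_mul_inner_pow_le_norm_sum_smul_tensorPow {N : Type*} [Fintype N] (k : ℕ)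
    (c : N → ℝ) (x : N → EuclideanSpace ℝ ι) {w : EuclideanSpace ℝ ι} (hw : ‖w‖ ≤ 1) :
    ∑ n, c n * ⟪w, x n⟫_ℝ ^ k ≤ ‖∑ n, c n • tensorPow k (x n)‖ := by
  calc ∑ n, c n * ⟪w, x n⟫_ℝ ^ k = ⟪tensorPow k w, ∑ n, c n • tensorPow k (x n)⟫_ℝ := by
        simp only [inner_sum, real_inner_smul_right, inner_tensorPow]
    _ ≤ ‖tensorPow k w‖ * ‖∑ n, c n • tensorPow k (x n)‖ := real_inner_le_norm _ _
    _ ≤ ‖∑ n, c n • tensorPow k (x n)‖ := by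
        rw [norm_tensorPow]
        exact mul_le_of_le_one_left (norm_nonneg _) (pow_le_one₀ (norm_nonneg w) hw)

end EuclideanSpace

theorem Real.sqrt_sum_sq_le_sqrt_card_mul {ι : Type*} [Fintype ι] {a : ι → ℝ} {B : ℝ}
    (h0 : ∀ i, 0 ≤ a i) (hB : ∀ i, a i ≤ B) :
    √(∑ i, a i ^ 2) ≤ √(Fintype.card ι) * B := by
  cases isEmpty_or_nonempty ι
  · simp
  have hB0 : 0 ≤ B := (h0 (Classical.arbitrary ι)).trans (hB _)
  rw [← Real.sqrt_sq hB0, ← Real.sqrt_mul (Nat.cast_nonneg _)]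
  gcongr
  calc ∑ i, a i ^ 2 ≤ ∑ _i : ι, B ^ 2 := sum_le_sum fun i _ => pow_le_pow_left₀ (h0 i) (hB i) 2
    _ = Fintype.card ι * B ^ 2 := by simp

noncomputable def boolSign (b : Bool) : ℝ := if b then 1 else -1

theorem boolSign_not (b : Bool) : boolSign (!b) = -boolSign b := by
  cases b <;> simp [boolSign]

theorem boolSign_mul_self (b : Bool) : boolSign b * boolSign b = 1 := by
  cases b <;> simp [boolSign]

section Rademacher

variable {ι : Type*} [Fintype ι] [DecidableEq ι]

theorem sum_boolSign_mul_boolSign (i j : ι) :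
    ∑ σ : ι → Bool, boolSign (σ i) * boolSign (σ j) =
      if i = j then (2 : ℝ) ^ Fintype.card ι else 0 := by
  split_ifs with hij
  · subst hij
    simp [boolSign_mul_self]
  · have hflip : Function.Involutive fun σ : ι → Bool => Function.update σ i (!σ i) :=
      fun σ => by simp
    have hsum := Fintype.sum_bijective _ hflip.bijective
      (fun σ => boolSign (σ i) * boolSign (σ j)) (fun σ => -(boolSign (σ i) * boolSign (σ j)))
      fun σ => by simp [Function.update_of_ne (Ne.symm hij), boolSign_not]
    rw [sum_neg_distrib] at hsum
    linarith

variable {E : Type*} [NormedAddCommGroup E] [InnerProductSpace ℝ E]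

theorem sum_norm_sq_sum_boolSign_smul (y : ι → E) :
    ∑ σ : ι → Bool, ‖∑ i, boolSign (σ i) • y i‖ ^ 2 =
      2 ^ Fintype.card ι * ∑ i, ‖y i‖ ^ 2 := by
  calc ∑ σ : ι → Bool, ‖∑ i, boolSign (σ i) • y i‖ ^ 2
      = ∑ i, ∑ j, (∑ σ : ι → Bool, boolSign (σ i) * boolSign (σ j)) * ⟪y j, y i⟫_ℝ := by
        simp only [← real_inner_self_eq_norm_sq, sum_inner, inner_sum, real_inner_smul_left,
          real_inner_smul_right, sum_mul, ← mul_assoc]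
        rw [sum_comm]
        exact sum_congr rfl fun i _ => sum_comm
    _ = 2 ^ Fintype.card ι * ∑ i, ‖y i‖ ^ 2 := by
        simp [sum_boolSign_mul_boolSign, ite_mul, mul_sum]

theorem sum_norm_sum_boolSign_smul_le (y : ι → E) :
    ∑ σ : ι → Bool, ‖∑ i, boolSign (σ i) • y i‖ ≤
      2 ^ Fintype.card ι * √(∑ i, ‖y i‖ ^ 2) := by
  have hcs := sq_sum_le_card_mul_sum_sq (s := univ)
    (f := fun σ : ι → Bool => ‖∑ i, boolSign (σ i) • y i‖)
  rw [sum_norm_sq_sum_boolSign_smul, card_univ, Fintype.card_fun, Fintype.card_bool] at hcs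
  rw [← Real.sqrt_sq (by positivity : (0 : ℝ) ≤ 2 ^ Fintype.card ι),
    ← Real.sqrt_mul (by positivity)]
  refine Real.le_sqrt_of_sq_le (hcs.trans_eq ?_)
  push_cast
  ring

end Rademacher

open EuclideanSpace in
theorem rademacher_sup_inner_pow_bound (d N k : ℕ) (M : ℝ)
    (x : Fin N → EuclideanSpace ℝ (Fin d)) (hx : ∀ n, ‖x n‖ ≤ M) :
    ((2 : ℝ) ^ N)⁻¹ * ∑ σ : Fin N → Bool,
      sSup {r : ℝ | ∃ w : EuclideanSpace ℝ (Fin d), ‖w‖ ≤ 1 ∧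
        r = ∑ n, (if σ n then (1 : ℝ) else -1) * (⟪w, x n⟫_ℝ) ^ k}
      ≤ Real.sqrt N * M ^ k := by
  calc _ ≤ ((2 : ℝ) ^ N)⁻¹ * ∑ σ : Fin N → Bool, ‖∑ n, boolSign (σ n) • tensorPow k (x n)‖ := by
        gcongr with σ
        refine Real.sSup_le ?_ (norm_nonneg _)
        rintro r ⟨w, hw, rfl⟩
        exact sum_mul_inner_pow_le_norm_sum_smul_tensorPow k _ x hw
    _ ≤ ((2 : ℝ) ^ N)⁻¹ * (2 ^ N * √(∑ n, (‖x n‖ ^ k) ^ 2)) := by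
        gcongr
        simpa [norm_tensorPow] using sum_norm_sum_boolSign_smul_le fun n => tensorPow k (x n)
    _ = √(∑ n, (‖x n‖ ^ k) ^ 2) := by field_simp
    _ ≤ √N * M ^ k := by
        simpa using Real.sqrt_sum_sq_le_sqrt_card_mul (fun n => by positivity)
          fun n => pow_le_pow_left₀ (norm_nonneg _) (hx n) k
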